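/- Let L be a Riesz space (a real vector lattice) with a strong unit e > 0 such that every element of L is e-clean, and let H : L → ℝ be a linear functional with H(e) = 1. Then the following are equivalent: (1) H(u) ≠ 0 for every strong unit u of L; (2) |H(u)| = H(|u|) for every strong unit u of L; (3) H is a Riesz homomorphism, i.e., |H(x)| = H(|x|) for all x ∈ L. -/

import Mathlib

/-- An element `u` of a Riesz space is a strong unit if for every `x` there is
`α > 0` with `|x| ≤ α • |u|`. -/
def IsStrongUnit {L : Type*} [Lattice L] [AddCommGroup L] [Module ℝ L]
    (u : L) : Prop :=
  ∀ x : L, ∃ α : ℝ, 0 < α ∧ |x| ≤ α • |u|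

/-- An element `x` is `e`-clean if `x = p + u` with `p` an `e`-component and
`u` a strong unit. -/
def IsEClean {L : Type*} [Lattice L] [AddCommGroup L] [Module ℝ L]
    (e x : L) : Prop :=
  ∃ p u : L, p ⊓ (e - p) = 0 ∧ IsStrongUnit u ∧ x = p + u

section Helpers

variable {L : Type*} [Lattice L] [AddCommGroup L]
    [CovariantClass L L (· + ·) (· ≤ ·)] [Module ℝ L] [PosSMulMono ℝ L]

/-- scalar-side monotonicity, derived from `PosSMulMono`. -/
lemma rsmul_mono {s t : ℝ} {w : L} (hst : s ≤ t) (hw : 0 ≤ w) : s • w ≤ t • w := by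
  have h : 0 ≤ (t - s) • w := smul_nonneg (sub_nonneg.mpr hst) hw
  have h2 : s • w + (t - s) • w = t • w := by
    rw [← add_smul]; norm_num
  calc s • w ≤ s • w + (t - s) • w := le_add_of_nonneg_right h
    _ = t • w := h2

lemma smul_inf' {c : ℝ} (hc : 0 < c) (x y : L) : c • (x ⊓ y) = (c • x) ⊓ (c • y) := by
  refine le_antisymm (le_inf (smul_le_smul_of_nonneg_left inf_le_left hc.le)
    (smul_le_smul_of_nonneg_left inf_le_right hc.le)) ?_
  have h1 : c⁻¹ • ((c • x) ⊓ (c • y)) ≤ x ⊓ y := by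
    refine le_inf ?_ ?_
    · have := smul_le_smul_of_nonneg_left (inf_le_left : (c • x) ⊓ (c • y) ≤ c • x)
        (inv_nonneg.mpr hc.le)
      simpa [smul_smul, inv_mul_cancel₀ hc.ne'] using this
    · have := smul_le_smul_of_nonneg_left (inf_le_right : (c • x) ⊓ (c • y) ≤ c • y)
        (inv_nonneg.mpr hc.le)
      simpa [smul_smul, inv_mul_cancel₀ hc.ne'] using this
  have := smul_le_smul_of_nonneg_left h1 hc.le
  simpa [smul_smul, mul_inv_cancel₀ hc.ne'] using this

lemma disj_smul {a b : L} (ha : 0 ≤ a) (hb : 0 ≤ b) (hab : a ⊓ b = 0)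
    {s t : ℝ} (hs : 0 ≤ s) (ht : 0 ≤ t) : (s • a) ⊓ (t • b) = 0 := by
  set m : ℝ := max s t + 1 with hm
  have hms : s ≤ m := by simp only [hm]; nlinarith [le_max_left s t]
  have hmt : t ≤ m := by simp only [hm]; nlinarith [le_max_right s t]
  have hm0 : 0 < m := by simp only [hm]; nlinarith [le_max_left s t]
  have h1 : (s • a) ⊓ (t • b) ≤ (m • a) ⊓ (m • b) :=
    inf_le_inf (rsmul_mono hms ha) (rsmul_mono hmt hb)
  have h2 : (m • a) ⊓ (m • b) = 0 := by rw [← smul_inf' hm0, hab, smul_zero]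
  exact le_antisymm (h2 ▸ h1) (le_inf (smul_nonneg hs ha) (smul_nonneg ht hb))

/-- `(a-b)⁺ = a - a ⊓ b`. -/
lemma posPart_sub_eq (a b : L) : (a - b)⁺ = a - a ⊓ b := by
  rw [posPart_def]
  have h1 : (a - b) ⊔ (b - b) = a ⊔ b - b := (sup_sub a b b).symm
  rw [sub_self] at h1
  rw [h1, sub_eq_sub_iff_add_eq_add, add_comm (a ⊔ b) (a ⊓ b)]
  exact (inf_add_sup a b)

lemma abs_sub_disjoint {a b : L} (hab : a ⊓ b = 0) : |a - b| = a + b := by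
  have hpos : (a - b)⁺ = a := by rw [posPart_sub_eq, hab, sub_zero]
  have hneg : (a - b)⁻ = b := by
    rw [negPart_def, neg_sub, ← posPart_def, posPart_sub_eq, inf_comm, hab, sub_zero]
  rw [← posPart_add_negPart (a - b), hpos, hneg]

/-- `z ⊓ (x + y) ≤ z ⊓ x + z ⊓ y` for nonnegative `x,y,z`. -/
lemma inf_add_le' {x y z : L} (hx : 0 ≤ x) (hy : 0 ≤ y) (hz : 0 ≤ z) :
    z ⊓ (x + y) ≤ z ⊓ x + z ⊓ y := by
  have A : z ⊓ (x + y) ≤ (z ⊓ x) + y := by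
    rw [inf_add z x y]
    exact le_inf (le_trans inf_le_left (le_add_of_nonneg_right hy)) inf_le_right
  have B : z ⊓ (x + y) ≤ (z ⊓ x) + z :=
    le_trans inf_le_left (le_add_of_nonneg_left (le_inf hz hx))
  calc z ⊓ (x + y) ≤ ((z ⊓ x) + y) ⊓ ((z ⊓ x) + z) := le_inf A B
    _ = (z ⊓ x) + (y ⊓ z) := (add_inf y z (z ⊓ x)).symm
    _ = z ⊓ x + z ⊓ y := by rw [inf_comm y z]

lemma abs_smul_nonneg {t : ℝ} {w : L} (hw : 0 ≤ w) : |t • w| = |t| • w := by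
  rcases le_total 0 t with h | h
  · rw [abs_of_nonneg (smul_nonneg h hw), abs_of_nonneg h]
  · have h1 : t • w ≤ 0 := by
      have := rsmul_mono h hw; rwa [zero_smul] at this
    rw [abs_of_nonpos h1, abs_of_nonpos h, ← neg_smul]

end Helpers

section Main

set_option linter.unusedSectionVars false

variable {L : Type*} [Lattice L] [AddCommGroup L]
    [CovariantClass L L (· + ·) (· ≤ ·)] [Module ℝ L] [PosSMulMono ℝ L]

lemma su_of_le_abs {e : L} (hse : IsStrongUnit e) (he : 0 ≤ e) {c : ℝ} (hc : 0 < c)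
    {w : L} (h : c • e ≤ |w|) : IsStrongUnit w := by
  intro x
  obtain ⟨α, hα, hx⟩ := hse x
  refine ⟨α / c, div_pos hα hc, ?_⟩
  rw [abs_of_nonneg he] at hx
  calc |x| ≤ α • e := hx
    _ = (α / c) • (c • e) := by rw [smul_smul]; congr 1; field_simp
    _ ≤ (α / c) • |w| := smul_le_smul_of_nonneg_left h (by positivity)

lemma Hmono (H : L →ₗ[ℝ] ℝ) (hpos : ∀ y : L, 0 ≤ y → 0 ≤ H y)
    {a b : L} (h : a ≤ b) : H a ≤ H b := by
  have := hpos (b - a) (sub_nonneg.mpr h)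
  rw [map_sub] at this; linarith

lemma Habs (H : L →ₗ[ℝ] ℝ) (hpos : ∀ y : L, 0 ≤ y → 0 ≤ H y) (z : L) :
    |H z| ≤ H |z| := by
  rw [abs_le]
  constructor
  · have := Hmono H hpos (neg_le_abs z)
    rw [map_neg] at this; linarith
  · exact Hmono H hpos (le_abs_self z)

lemma Hpos1 {e : L} (he : 0 < e) (hse : IsStrongUnit e) (H : L →ₗ[ℝ] ℝ) (hH1 : H e = 1)
    (h1 : ∀ u : L, IsStrongUnit u → H u ≠ 0) : ∀ y : L, 0 ≤ y → 0 ≤ H y := by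
  intro y hy
  by_contra hneg
  push_neg at hneg
  set t : ℝ := -(H y)⁻¹ with ht
  have htpos : 0 < t := by
    have := inv_lt_zero.mpr hneg
    rw [ht]; linarith
  have hw : (1:ℝ) • e ≤ |e + t • y| := by
    have h0 : 0 ≤ e + t • y := add_nonneg he.le (smul_nonneg htpos.le hy)
    rw [abs_of_nonneg h0, one_smul]
    exact le_add_of_nonneg_right (smul_nonneg htpos.le hy)
  refine h1 _ (su_of_le_abs hse he.le one_pos hw) ?_
  rw [map_add, map_smul, hH1, smul_eq_mul, ht, neg_mul,
    inv_mul_cancel₀ hneg.ne]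
  ring

lemma comp01 {e : L} (he : 0 < e) (hse : IsStrongUnit e) (H : L →ₗ[ℝ] ℝ) (hH1 : H e = 1)
    (h1 : ∀ u : L, IsStrongUnit u → H u ≠ 0) {p : L} (hp : p ⊓ (e - p) = 0) :
    H p = 0 ∨ H p = 1 := by
  have hpos := Hpos1 he hse H hH1 h1
  have hp0 : 0 ≤ p := hp ▸ inf_le_left
  have hep : 0 ≤ e - p := hp ▸ inf_le_right
  have h0 : 0 ≤ H p := hpos p hp0
  have h1' : H p ≤ 1 := by
    have := hpos _ hep; rw [map_sub, hH1] at this; linarith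
  by_contra hcon
  push_neg at hcon
  obtain ⟨hne0, hne1⟩ := hcon
  have hlt1 : H p < 1 := lt_of_le_of_ne h1' hne1
  have hgt0 : 0 < H p := lt_of_le_of_ne h0 (Ne.symm hne0)
  set t : ℝ := H p / (1 - H p) with ht
  have htpos : 0 < t := div_pos hgt0 (by linarith)
  set v : L := p - t • (e - p) with hv
  have habs : |v| = p + t • (e - p) := by
    have hd : ((1:ℝ) • p) ⊓ (t • (e - p)) = 0 := disj_smul hp0 hep hp zero_le_one htpos.le
    rw [one_smul] at hd
    rw [hv]
    exact abs_sub_disjoint hd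
  set μ : ℝ := min 1 t with hμdef
  have hμ : 0 < μ := lt_min one_pos htpos
  have hμe : μ • e ≤ |v| := by
    rw [habs]
    have hsplit : μ • e = μ • p + μ • (e - p) := by
      rw [← smul_add]; congr 1; abel
    rw [hsplit]
    have hh1 : μ • p ≤ p := by
      have := rsmul_mono (min_le_left 1 t) hp0
      rwa [one_smul] at this
    have hh2 : μ • (e - p) ≤ t • (e - p) := rsmul_mono (min_le_right 1 t) hep
    exact add_le_add hh1 hh2
  refine h1 v (su_of_le_abs hse he.le hμ hμe) ?_
  have hne : (1:ℝ) - H p ≠ 0 := sub_ne_zero.mpr (Ne.symm hne1)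
  rw [hv, map_sub, map_smul, map_sub, hH1, smul_eq_mul, ht,
    div_mul_cancel₀ (H p) hne, sub_self]

lemma iterLem {d p : L} (hd : 0 ≤ d) {l : ℝ} (h0 : 0 < l) (hl1 : l < 1)
    (h : d ⊓ p ≤ l • p) : ∀ k : ℕ, (l ^ k • d) ⊓ p ≤ l ^ (k + 1) • p := by
  intro k
  induction k with
  | zero => simpa using h
  | succ k ih =>
    have hpow : (0:ℝ) < l ^ (k + 1) := pow_pos h0 _
    have step1 : (l ^ (k+1) • d) ⊓ p ≤ (l ^ k • d) ⊓ p :=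
      inf_le_inf_right p (rsmul_mono (pow_le_pow_of_le_one h0.le hl1.le (Nat.le_succ k)) hd)
    have hu1 : (l ^ (k+1) • d) ⊓ p ≤ l ^ (k+1) • p := le_trans step1 ih
    have hv1 : (l ^ (k+1))⁻¹ • ((l ^ (k+1) • d) ⊓ p) ≤ p := by
      have := smul_le_smul_of_nonneg_left hu1 (inv_nonneg.mpr hpow.le)
      simpa [smul_smul, inv_mul_cancel₀ hpow.ne'] using this
    have hv2 : (l ^ (k+1))⁻¹ • ((l ^ (k+1) • d) ⊓ p) ≤ d := by
      have := smul_le_smul_of_nonneg_left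
        (inf_le_left : (l ^ (k+1) • d) ⊓ p ≤ l ^ (k+1) • d) (inv_nonneg.mpr hpow.le)
      simpa [smul_smul, inv_mul_cancel₀ hpow.ne'] using this
    have hv3 : (l ^ (k+1))⁻¹ • ((l ^ (k+1) • d) ⊓ p) ≤ l • p :=
      le_trans (le_inf hv2 hv1) h
    have hfin := smul_le_smul_of_nonneg_left hv3 hpow.le
    rw [smul_smul, mul_inv_cancel₀ hpow.ne', one_smul, smul_smul] at hfin
    calc (l ^ (k+1) • d) ⊓ p ≤ (l ^ (k+1) * l) • p := hfin
      _ = l ^ (k+1+1) • p := by rw [← pow_succ]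

lemma lemB {e : L} {A B p u : L} (hA0 : 0 ≤ A) (hAe : A ≤ e) (hB : 0 ≤ B)
    (hAB : A ⊓ B = 0) (hp : p ⊓ (e - p) = 0) (hu : u = A - B - p) {ε : ℝ}
    (hε0 : 0 < ε) (hε1 : ε ≤ 1) (hεe : ε • e ≤ |u|) :
    A ⊓ p ≤ (1 + ε)⁻¹ • p := by
  have hp0 : 0 ≤ p := hp ▸ inf_le_left
  have hep : 0 ≤ e - p := hp ▸ inf_le_right
  have hpe : p ≤ e := sub_nonneg.mp hep
  set w := A ⊓ p with hw
  have hw0 : 0 ≤ w := le_inf hA0 hp0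
  have hwp : w ≤ p := inf_le_right
  have hwA : w ≤ A := inf_le_left
  have hwe : w ≤ e := le_trans hwp hpe
  have h1 : ε • w ≤ (ε • e) ⊓ w := by
    refine le_inf (smul_le_smul_of_nonneg_left hwe hε0.le) ?_
    have := rsmul_mono hε1 hw0
    rwa [one_smul] at this
  have h2 : (ε • e) ⊓ w ≤ |u| ⊓ w := inf_le_inf_right w hεe
  have h3 : |u| ⊓ w = w ⊓ (u⁺ + u⁻) := by rw [inf_comm, posPart_add_negPart]
  have h4 : w ⊓ (u⁺ + u⁻) ≤ w ⊓ u⁺ + w ⊓ u⁻ :=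
    inf_add_le' (posPart_nonneg u) (negPart_nonneg u) hw0
  have h5 : w ⊓ u⁺ ≤ 0 := by
    have hu1 : u ≤ e - p := by
      rw [hu]
      calc A - B - p ≤ A - p := by
            have : A - B ≤ A := sub_le_self A hB
            exact sub_le_sub_right this p
        _ ≤ e - p := sub_le_sub_right hAe p
    have hu2 : u⁺ ≤ e - p := by
      rw [posPart_def]; exact sup_le hu1 hep
    calc w ⊓ u⁺ ≤ p ⊓ (e - p) := inf_le_inf hwp hu2
      _ = 0 := hp
  have h6 : w ⊓ u⁻ ≤ p - w := by
    have hnu : -u = (p - A) + B := by rw [hu]; abel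
    have hneg : u⁻ ≤ (p - A)⁺ + B := by
      rw [negPart_def, hnu]
      refine sup_le (add_le_add_left ?_ B) (add_nonneg (posPart_nonneg _) hB)
      rw [posPart_def]; exact le_sup_left
    have hppart : (p - A)⁺ = p - w := by rw [posPart_sub_eq, hw, inf_comm]
    calc w ⊓ u⁻ ≤ w ⊓ ((p - A)⁺ + B) := inf_le_inf_left w hneg
      _ = w ⊓ ((p - w) + B) := by rw [hppart]
      _ ≤ w ⊓ (p - w) + w ⊓ B := inf_add_le' (sub_nonneg.mpr hwp) hB hw0
      _ ≤ (p - w) + 0 := by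
          refine add_le_add inf_le_right ?_
          calc w ⊓ B ≤ A ⊓ B := inf_le_inf_right B hwA
            _ = 0 := hAB
      _ = p - w := add_zero _
  have hchain : ε • w ≤ p - w := by
    calc ε • w ≤ (ε • e) ⊓ w := h1
      _ ≤ |u| ⊓ w := h2
      _ = w ⊓ (u⁺ + u⁻) := h3
      _ ≤ w ⊓ u⁺ + w ⊓ u⁻ := h4
      _ ≤ 0 + (p - w) := add_le_add h5 h6
      _ = p - w := zero_add _
  have hfin : (1 + ε) • w ≤ p := by
    rw [add_smul, one_smul]
    calc w + ε • w ≤ w + (p - w) := add_le_add_right hchain w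
      _ = p := by abel
  have hc : (0:ℝ) < 1 + ε := by linarith
  have := smul_le_smul_of_nonneg_left hfin (inv_nonneg.mpr hc.le)
  rw [smul_smul, inv_mul_cancel₀ hc.ne', one_smul] at this
  exact this

lemma coreLem {e : L} (he : 0 < e) (hse : IsStrongUnit e)
    (hclean : ∀ x : L, IsEClean e x)
    (H : L →ₗ[ℝ] ℝ) (hH1 : H e = 1)
    (h1 : ∀ u : L, IsStrongUnit u → H u ≠ 0)
    {a b : L} (ha : 0 ≤ a) (hb : 0 ≤ b) (hab : a ⊓ b = 0)
    {γ : ℝ} (hγ : 0 < γ) (hae : a ≤ γ • e)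
    {c₁ c₂ : ℝ} (hc₁ : 1/γ < c₁) (hc₂ : 0 ≤ c₂)
    (hF : H ((c₁ • a) ⊓ e) = H ((c₂ • b) ⊓ e)) : H a ≤ 1 / c₁ := by
  have hpos := Hpos1 he hse H hH1 h1
  have hc₁0 : 0 < c₁ := lt_trans (by positivity) hc₁
  set A := (c₁ • a) ⊓ e with hA
  set B := (c₂ • b) ⊓ e with hB
  have hA0 : 0 ≤ A := le_inf (smul_nonneg hc₁0.le ha) he.le
  have hB0 : 0 ≤ B := le_inf (smul_nonneg hc₂ hb) he.le
  have hAe : A ≤ e := inf_le_right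
  have hABd : A ⊓ B = 0 := by
    have h' : A ⊓ B ≤ (c₁ • a) ⊓ (c₂ • b) := inf_le_inf inf_le_left inf_le_left
    rw [disj_smul ha hb hab hc₁0.le hc₂] at h'
    exact le_antisymm h' (le_inf hA0 hB0)
  obtain ⟨p, u, hpcomp, hsu, hx⟩ := hclean (A - B)
  have hHx : H (A - B) = 0 := by rw [map_sub, hF, sub_self]
  have hHu : H u = - H p := by
    have h' : H (A - B) = H p + H u := by rw [hx, map_add]
    rw [hHx] at h'; linarith
  have hHp1 : H p = 1 := by
    rcases comp01 he hse H hH1 h1 hpcomp with h | h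
    · exact absurd (by rw [hHu, h, neg_zero]) (h1 u hsu)
    · exact h
  obtain ⟨α, hα, hα'⟩ := hsu e
  rw [abs_of_nonneg he.le] at hα'
  set ε : ℝ := min α⁻¹ 1 with hε
  have hε0 : 0 < ε := lt_min (by positivity) one_pos
  have hε1 : ε ≤ 1 := min_le_right _ _
  have hεe : ε • e ≤ |u| := by
    have h' : α⁻¹ • e ≤ |u| := by
      have := smul_le_smul_of_nonneg_left hα' (inv_nonneg.mpr hα.le)
      simpa [smul_smul, inv_mul_cancel₀ hα.ne'] using this
    exact le_trans (rsmul_mono (min_le_left _ _) he.le) h'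
  have huAB : u = A - B - p := by rw [hx]; abel
  have hlemB := lemB hA0 hAe hB0 hABd hpcomp huAB hε0 hε1 hεe
  set l : ℝ := (1 + ε)⁻¹ with hl
  have hl0 : 0 < l := by positivity
  have hl1 : l < 1 := by
    rw [hl]
    have h' : (1:ℝ) < 1 + ε := by linarith
    exact inv_lt_one_of_one_lt₀ h'
  have hp0 : 0 ≤ p := hpcomp ▸ inf_le_left
  have hpe : p ≤ e := sub_nonneg.mp (hpcomp ▸ inf_le_right)
  have hdp : (c₁ • a) ⊓ p ≤ l • p := by
    have heq : (c₁ • a) ⊓ p = A ⊓ p := by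
      have h' : e ⊓ p = p := inf_eq_right.mpr hpe
      rw [hA, inf_assoc, h']
    rw [heq]; exact hlemB
  have hiter := iterLem (smul_nonneg hc₁0.le ha) hl0 hl1 hdp
  obtain ⟨k, hk⟩ := exists_pow_lt_of_lt_one (by positivity : (0:ℝ) < 1/(γ * c₁)) hl1
  set n : ℝ := l ^ k * c₁ with hn
  have hlk : 0 < l ^ k := pow_pos hl0 k
  have hn0 : 0 < n := mul_pos hlk hc₁0
  have hnγ : n * γ ≤ 1 := by
    rw [hn]
    rw [lt_div_iff₀ (by positivity : (0:ℝ) < γ * c₁)] at hk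
    nlinarith
  set z : L := (l ^ k) • (c₁ • a) with hz
  have hzn : z = n • a := by rw [hz, smul_smul, hn]
  have hze : z ≤ e := by
    rw [hzn]
    calc n • a ≤ n • (γ • e) := smul_le_smul_of_nonneg_left hae hn0.le
      _ = (n * γ) • e := by rw [smul_smul]
      _ ≤ (1:ℝ) • e := rsmul_mono hnγ he.le
      _ = e := one_smul ℝ e
  have hzp : z ⊓ p ≤ l ^ (k+1) • p := hiter k
  have hrest : z - z ⊓ p ≤ e - p := by
    have h' : z - z ⊓ p = z ⊔ p - p := by
      rw [sub_eq_sub_iff_add_eq_add, add_comm (z ⊔ p) (z ⊓ p)]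
      exact (inf_add_sup z p).symm
    rw [h']
    exact sub_le_sub_right (sup_le hze hpe) p
  have hcalc : H z ≤ l ^ (k+1) := by
    have h1' : H (z ⊓ p) ≤ l^(k+1) := by
      have h'' := Hmono H hpos hzp
      rw [map_smul, smul_eq_mul, hHp1, mul_one] at h''; exact h''
    have h2' : H (z - z ⊓ p) ≤ 0 := by
      have h'' := Hmono H hpos hrest
      have h0 : H (e - p) = 0 := by rw [map_sub, hH1, hHp1, sub_self]
      rw [h0] at h''; exact h''
    have h3' : H z = H (z ⊓ p) + H (z - z ⊓ p) := by
      rw [map_sub]; ring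
    linarith
  have hHz : H z = n * H a := by rw [hzn, map_smul, smul_eq_mul]
  have hfin : H a ≤ l ^ (k + 1) / n := by
    rw [le_div_iff₀ hn0, mul_comm]
    rw [hHz] at hcalc; exact hcalc
  calc H a ≤ l^(k+1)/n := hfin
    _ ≤ l^k / n := by
        have h' : l^(k+1) ≤ l^k := pow_le_pow_of_le_one hl0.le hl1.le (Nat.le_succ k)
        exact (div_le_div_iff_of_pos_right hn0).mpr h'
    _ = 1 / c₁ := by rw [hn]; field_simp

lemma contF {e : L} (H : L →ₗ[ℝ] ℝ) (hpos : ∀ y : L, 0 ≤ y → 0 ≤ H y) {w : L} (hw : 0 ≤ w) :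
    Continuous (fun c : ℝ => H ((c • w) ⊓ e)) := by
  have hlip : LipschitzWith (Real.toNNReal (H w)) (fun c : ℝ => H ((c • w) ⊓ e)) := by
    apply LipschitzWith.of_dist_le_mul
    intro c c'
    rw [Real.dist_eq, Real.dist_eq]
    have h1 : |(c • w) ⊓ e - (c' • w) ⊓ e| ≤ |c • w - c' • w| := abs_inf_sub_inf_le_abs _ _ _
    have h2 : |c • w - c' • w| = |c - c'| • w := by rw [← sub_smul]; exact abs_smul_nonneg hw
    have h3 : |H ((c • w) ⊓ e) - H ((c' • w) ⊓ e)| ≤ H (|c - c'| • w) := by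
      rw [← map_sub]
      refine le_trans (Habs H hpos _) ?_
      exact Hmono H hpos (le_trans h1 (le_of_eq h2))
    rw [map_smul, smul_eq_mul] at h3
    calc |H ((c • w) ⊓ e) - H ((c' • w) ⊓ e)| ≤ |c - c'| * H w := h3
      _ = H w * |c - c'| := mul_comm _ _
      _ ≤ (Real.toNNReal (H w) : ℝ) * |c - c'| :=
          mul_le_mul_of_nonneg_right (Real.le_coe_toNNReal (H w)) (abs_nonneg _)
  exact hlip.continuous

lemma keyLem {e : L} (he : 0 < e) (hse : IsStrongUnit e)
    (hclean : ∀ x : L, IsEClean e x)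
    (H : L →ₗ[ℝ] ℝ) (hH1 : H e = 1)
    (h1 : ∀ u : L, IsStrongUnit u → H u ≠ 0)
    {y : L} (hy : H y = 0) : H (y⁺) = 0 := by
  have hpos := Hpos1 he hse H hH1 h1
  by_contra hδ
  have hδ0 : 0 ≤ H (y⁺) := hpos _ (posPart_nonneg y)
  have hδpos : 0 < H (y⁺) := lt_of_le_of_ne hδ0 (Ne.symm hδ)
  have hyparts : H (y⁻) = H (y⁺) := by
    have h' : H (y⁺) - H (y⁻) = 0 := by
      rw [← map_sub, posPart_sub_negPart]; exact hy
    linarith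
  obtain ⟨γ, hγ, hγ'⟩ := hse y
  rw [abs_of_nonneg he.le] at hγ'
  have hppabs : y⁺ ≤ |y| := by
    rw [posPart_def]; exact sup_le (le_abs_self y) (abs_nonneg y)
  have hnpabs : y⁻ ≤ |y| := by
    rw [negPart_def]; exact sup_le (neg_le_abs y) (abs_nonneg y)
  have hbound : ∀ C : ℝ, 0 < C → H (y⁺) ≤ 1/C := by
    intro C hC
    set c₁ : ℝ := max C (1/γ) + 1 with hc₁def
    have hc₁C : C < c₁ := by simp only [hc₁def]; nlinarith [le_max_left C (1/γ)]
    have hc₁γ : 1/γ < c₁ := by simp only [hc₁def]; nlinarith [le_max_right C (1/γ)]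
    have hc₁0 : 0 < c₁ := lt_trans hC hc₁C
    set F : ℝ → ℝ := fun c => H ((c • y⁺) ⊓ e) with hFdef
    set G : ℝ → ℝ := fun c => H ((c • y⁻) ⊓ e) with hGdef
    have hF0 : F 0 = 0 := by
      have h0 : ((0:ℝ) • y⁺) ⊓ e = 0 := by rw [zero_smul]; exact inf_eq_left.mpr he.le
      simp only [hFdef]; rw [h0, map_zero]
    have hG0 : G 0 = 0 := by
      have h0 : ((0:ℝ) • y⁻) ⊓ e = 0 := by rw [zero_smul]; exact inf_eq_left.mpr he.le
      simp only [hGdef]; rw [h0, map_zero]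
    rcases le_total (G c₁) (F c₁) with hle | hle
    · have hmem : G c₁ ∈ Set.Icc (F 0) (F c₁) := by
        refine ⟨?_, hle⟩
        rw [hF0]
        exact hpos _ (le_inf (smul_nonneg hc₁0.le (negPart_nonneg y)) he.le)
      obtain ⟨c₂, hc₂mem, hc₂eq⟩ := intermediate_value_Icc hc₁0.le
        ((contF H hpos (posPart_nonneg y)).continuousOn) hmem
      have hres := coreLem he hse hclean H hH1 h1 (negPart_nonneg y) (posPart_nonneg y)
        (by rw [inf_comm]; exact posPart_inf_negPart_eq_zero y) hγ (le_trans hnpabs hγ')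
        hc₁γ hc₂mem.1 hc₂eq.symm
      calc H (y⁺) = H (y⁻) := hyparts.symm
        _ ≤ 1/c₁ := hres
        _ ≤ 1/C := one_div_le_one_div_of_le hC hc₁C.le
    · have hmem : F c₁ ∈ Set.Icc (G 0) (G c₁) := by
        refine ⟨?_, hle⟩
        rw [hG0]
        exact hpos _ (le_inf (smul_nonneg hc₁0.le (posPart_nonneg y)) he.le)
      obtain ⟨c₂, hc₂mem, hc₂eq⟩ := intermediate_value_Icc hc₁0.le
        ((contF H hpos (negPart_nonneg y)).continuousOn) hmem
      have hres := coreLem he hse hclean H hH1 h1 (posPart_nonneg y) (negPart_nonneg y)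
        (posPart_inf_negPart_eq_zero y) hγ (le_trans hppabs hγ')
        hc₁γ hc₂mem.1 hc₂eq.symm
      calc H (y⁺) ≤ 1/c₁ := hres
        _ ≤ 1/C := one_div_le_one_div_of_le hC hc₁C.le
  have hcon := hbound (2 / H (y⁺)) (by positivity)
  rw [one_div_div] at hcon
  linarith

lemma mainLem {e : L} (he : 0 < e) (hse : IsStrongUnit e)
    (hclean : ∀ x : L, IsEClean e x)
    (H : L →ₗ[ℝ] ℝ) (hH1 : H e = 1)
    (h1 : ∀ u : L, IsStrongUnit u → H u ≠ 0) : ∀ x : L, |H x| = H |x| := by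
  have hpos := Hpos1 he hse H hH1 h1
  intro x
  set y : L := x - (H x) • e with hy
  have hHy : H y = 0 := by
    rw [hy, map_sub, map_smul, smul_eq_mul, hH1, mul_one, sub_self]
  have hpp : H (y⁺) = 0 := keyLem he hse hclean H hH1 h1 hHy
  have hnp : H (y⁻) = 0 := by
    have h' : H (y⁺) - H (y⁻) = 0 := by rw [← map_sub, posPart_sub_negPart]; exact hHy
    linarith
  have habs_y : H |y| = 0 := by
    rw [← posPart_add_negPart y, map_add, hpp, hnp, add_zero]
  set v : L := (H x) • e with hv
  have h1' : H |x| ≤ H |v| := by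
    have hle : |x| ≤ |v| + |y| := by
      calc |x| = |v + y| := by congr 1; rw [hy, hv]; abel
        _ ≤ |v| + |y| := abs_add_le v y
    have := Hmono H hpos hle
    rwa [map_add, habs_y, add_zero] at this
  have h2' : H |v| ≤ H |x| := by
    have hle : |v| ≤ |x| + |y| := by
      calc |v| = |x + -y| := by congr 1; rw [hy, hv]; abel
        _ ≤ |x| + |-y| := abs_add_le x (-y)
        _ = |x| + |y| := by rw [abs_neg]
    have := Hmono H hpos hle
    rwa [map_add, habs_y, add_zero] at this
  have hveq : H |v| = |H x| := by
    rw [hv, abs_smul_nonneg he.le, map_smul, smul_eq_mul, hH1, mul_one]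
  rw [← hveq]
  exact le_antisymm h2' h1'

lemma two_implies_one {e : L} (he : 0 < e) (hse : IsStrongUnit e)
    (H : L →ₗ[ℝ] ℝ) (hH1 : H e = 1)
    (h2 : ∀ u : L, IsStrongUnit u → |H u| = H |u|) :
    ∀ u : L, IsStrongUnit u → H u ≠ 0 := by
  have hpos : ∀ y : L, 0 ≤ y → 0 ≤ H y := by
    intro y hy
    by_contra hneg
    push_neg at hneg
    set t : ℝ := -2 * (H y)⁻¹ with ht
    have htpos : 0 < t := by
      have := inv_lt_zero.mpr hneg
      rw [ht]; nlinarith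
    have hw0 : 0 ≤ e + t • y := add_nonneg he.le (smul_nonneg htpos.le hy)
    have hwu : IsStrongUnit (e + t • y) := by
      refine su_of_le_abs hse he.le one_pos ?_
      rw [abs_of_nonneg hw0, one_smul]
      exact le_add_of_nonneg_right (smul_nonneg htpos.le hy)
    have hval : H (e + t • y) = -1 := by
      have ht2 : t * H y = -2 := by rw [ht, mul_assoc, inv_mul_cancel₀ hneg.ne, mul_one]
      rw [map_add, map_smul, smul_eq_mul, hH1, ht2]; norm_num
    have habs := h2 _ hwu
    rw [abs_of_nonneg hw0, hval] at habs
    norm_num at habs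
  intro u hu hu0
  have habs : H |u| = 0 := by rw [← h2 u hu, hu0, abs_zero]
  obtain ⟨α, hα, hα'⟩ := hu e
  rw [abs_of_nonneg he.le] at hα'
  have := Hmono H hpos hα'
  rw [map_smul, smul_eq_mul, habs, mul_zero, hH1] at this
  linarith

end Main

theorem stmt10 {L : Type*} [Lattice L] [AddCommGroup L]
    [CovariantClass L L (· + ·) (· ≤ ·)] [Module ℝ L] [PosSMulMono ℝ L]
    (e : L) (he : 0 < e) (hse : IsStrongUnit e)
    (hclean : ∀ x : L, IsEClean e x)
    (H : L →ₗ[ℝ] ℝ) (hH1 : H e = 1) :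
    ((∀ u : L, IsStrongUnit u → H u ≠ 0) ↔
      (∀ u : L, IsStrongUnit u → |H u| = H |u|)) ∧
    ((∀ u : L, IsStrongUnit u → |H u| = H |u|) ↔
      (∀ x : L, |H x| = H |x|)) := by
  constructor
  · constructor
    · intro h1 u _
      exact mainLem he hse hclean H hH1 h1 u
    · intro h2
      exact two_implies_one he hse H hH1 h2
  · constructor
    · intro h2 x
      exact mainLem he hse hclean H hH1 (two_implies_one he hse H hH1 h2) x
    · intro h3 u _
      exact h3 u
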